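/- arXiv:1911.03251 — 8 statements merged into one kernel-verified Lean document; each statement's English description precedes it below -/
import Mathlib

section
/- Let R be a commutative Noetherian UFD and M a finitely presented R-module generated by p elements. Then gcd(ann_R(M)) divides ord_R(M), and ord_R(M) divides gcd(ann_R(M))^p, where ord_R(M) denotes the gcd of the zeroth Fitting ideal. -/
/-- The zeroth Fitting ideal of a presentation matrix `A ∈ M_{q,p}(R)`:
the ideal generated by the `p × p` minors of `A`. -/
def fitt0 {R : Type*} [CommRing R] {q p : ℕ} (A : Matrix (Fin q) (Fin p) R) : Ideal R :=
  Ideal.span { d : R | ∃ r : Fin p ↪ Fin q, d = (A.submatrix r id).det }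

/-- `d` is a greatest common divisor of the set `S`. -/
def IsGCDOf {R : Type*} [CommRing R] (d : R) (S : Set R) : Prop :=
  (∀ s ∈ S, d ∣ s) ∧ ∀ c : R, (∀ s ∈ S, c ∣ s) → c ∣ d

/-!
Every `p × p` minor of `A` is `det (C * A)` for a row-selection matrix `C`, and for any `C` the
adjugate identity `adj (C * A) * (C * A) = det (C * A) • 1` shows that `det (C * A)` kills
`M = coker A`; hence `Fitt₀ ⊆ ann M` and `gcd ann ∣ ord`. Conversely, if `a` kills `M` then each
`a • eⱼ` is a relation, i.e. `a • 1 = C * A` for some `C`, and expanding `det (C * A)` by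
multilinearity in the rows writes it as a combination of minors, so `aᵖ ∈ Fitt₀`. In a UFD a
common divisor of all `aᵖ`, `a ∈ S`, divides `(gcd S)ᵖ`: for each prime `π` some `a ∈ S` has
`v_π(a) = v_π(gcd S)`.
-/

namespace Matrix

variable {R : Type*} [CommRing R] {m n : Type*} [Fintype m] [Fintype n] [DecidableEq n]

theorem det_mul_eq_sum_prod_mul_det_submatrix [DecidableEq m] (C : Matrix n m R)
    (A : Matrix m n R) :
    (C * A).det = ∑ f : n → m, (∏ i, C i (f i)) * (A.submatrix f id).det := by
  have hrows : (C * A : n → n → R) = fun i => ∑ j, C i j • A j := by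
    ext i k; simp [mul_apply, Finset.sum_apply]
  calc (C * A).det = detRowAlternating fun i => ∑ j, C i j • A j := congrArg _ hrows
    _ = ∑ f : n → m, detRowAlternating fun i => C i (f i) • A (f i) :=
      detRowAlternating.toMultilinearMap.map_sum (g := fun i j => C i j • A j)
    _ = _ := Finset.sum_congr rfl fun f _ =>
      detRowAlternating.toMultilinearMap.map_smul_univ _ _

theorem det_mul_smul_mem_range_vecMulLinear (C : Matrix n m R) (A : Matrix m n R) (x : n → R) :
    (C * A).det • x ∈ LinearMap.range A.vecMulLinear :=
  ⟨x ᵥ* (adjugate (C * A) * C), by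
    rw [vecMulLinear_apply, vecMul_vecMul, Matrix.mul_assoc, adjugate_mul, vecMul_smul,
      vecMul_one]⟩

end Matrix

open Matrix

section Presentation

variable {R : Type*} [CommRing R] {M : Type*} [AddCommGroup M] [Module R M] {q p : ℕ}
  {A : Matrix (Fin q) (Fin p) R} {π : (Fin p → R) →ₗ[R] M}

theorem det_mul_mem_fitt0 (C : Matrix (Fin p) (Fin q) R) : (C * A).det ∈ fitt0 A := by
  rw [det_mul_eq_sum_prod_mul_det_submatrix]
  refine Ideal.sum_mem _ fun f _ => Ideal.mul_mem_left _ _ ?_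
  by_cases hf : Function.Injective f
  · exact Ideal.subset_span ⟨⟨f, hf⟩, rfl⟩
  · obtain ⟨i, j, hij, hne⟩ : ∃ i j, f i = f j ∧ i ≠ j := by
      simpa [Function.Injective] using hf
    rw [det_zero_of_row_eq hne (funext fun k => by simp [hij])]
    exact zero_mem _

theorem fitt0_le_annihilator (hsurj : Function.Surjective π)
    (hker : LinearMap.ker π = LinearMap.range A.vecMulLinear) :
    fitt0 A ≤ Module.annihilator R M := by
  refine Ideal.span_le.mpr ?_
  rintro _ ⟨r, rfl⟩
  rw [SetLike.mem_coe, Module.mem_annihilator]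
  intro m
  obtain ⟨x, rfl⟩ := hsurj m
  rw [← map_smul, ← LinearMap.mem_ker, hker]
  have h := det_mul_smul_mem_range_vecMulLinear
    ((1 : Matrix _ _ R).submatrix r (Equiv.refl _)) A x
  rwa [one_submatrix_mul] at h

theorem pow_mem_fitt0_of_mem_annihilator
    (hker : LinearMap.ker π = LinearMap.range A.vecMulLinear)
    {a : R} (ha : a ∈ Module.annihilator R M) : a ^ p ∈ fitt0 A := by
  have hrow : ∀ j : Fin p, ∃ c : Fin q → R, c ᵥ* A = a • Pi.single j 1 := by
    intro j
    have : a • Pi.single j 1 ∈ LinearMap.ker π := by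
      rw [LinearMap.mem_ker, map_smul, Module.mem_annihilator.mp ha]
    obtain ⟨c, hc⟩ := hker ▸ this
    exact ⟨c, hc⟩
  choose C hC using hrow
  have hCA : of C * A = a • (1 : Matrix (Fin p) (Fin p) R) := by
    ext j k
    simpa [mul_apply, vecMul, dotProduct, one_apply, Pi.single_apply, eq_comm]
      using congrFun (hC j) k
  simpa [hCA, det_smul] using det_mul_mem_fitt0 (A := A) (of C)

end Presentation

namespace IsGCDOf

variable {R : Type*} [CommRing R] {S : Set R} {d e : R}

theorem exists_not_dvd (he : IsGCDOf e S) {c : R} (hc : ¬c ∣ e) : ∃ a ∈ S, ¬c ∣ a := by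
  by_contra! h
  exact hc (he.2 c h)

theorem dvd_of_subset {T : Set R} (he : IsGCDOf e S) (hd : IsGCDOf d T) (hTS : T ⊆ S) : e ∣ d :=
  hd.2 e fun t ht => he.1 t (hTS ht)

variable [IsDomain R]

theorem exists_emultiplicity_le [WfDvdMonoid R] (he : IsGCDOf e S) (he0 : e ≠ 0) {π : R}
    (hπ : Prime π) : ∃ a ∈ S, emultiplicity π a ≤ emultiplicity π e := by
  have hfin := FiniteMultiplicity.of_prime_left hπ he0
  obtain ⟨a, haS, ha⟩ :=
    he.exists_not_dvd (hfin.not_pow_dvd_of_multiplicity_lt (Nat.lt_succ_self _))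
  refine ⟨a, haS, ?_⟩
  rw [hfin.emultiplicity_eq_multiplicity, ← ENat.lt_natCast_add_one_iff]
  exact_mod_cast emultiplicity_lt_iff_not_dvd.mpr ha

theorem dvd_pow_of_forall_dvd_pow [UniqueFactorizationMonoid R] (he : IsGCDOf e S)
    (hS : S.Nonempty) {p : ℕ} (h : ∀ a ∈ S, d ∣ a ^ p) : d ∣ e ^ p := by
  by_cases he0 : e = 0
  · obtain ⟨a, haS⟩ := hS
    have ha0 : a = 0 := zero_dvd_iff.mp (he0 ▸ he.1 a haS)
    simpa [ha0, he0] using h a haS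
  obtain ⟨a, haS, ha0⟩ := he.exists_not_dvd (c := 0) (by simpa using he0)
  have hd0 : d ≠ 0 := ne_zero_of_dvd_ne_zero (pow_ne_zero p (mt zero_dvd_iff.mpr ha0)) (h a haS)
  rw [UniqueFactorizationMonoid.dvd_iff_emultiplicity_le hd0]
  intro π hπ
  obtain ⟨b, hbS, hb⟩ := he.exists_emultiplicity_le he0 hπ
  calc emultiplicity π d ≤ emultiplicity π (b ^ p) :=
        emultiplicity_le_emultiplicity_of_dvd_right (h b hbS)
    _ = p * emultiplicity π b := emultiplicity_pow hπ
    _ ≤ p * emultiplicity π e := by gcongr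
    _ = emultiplicity π (e ^ p) := (emultiplicity_pow hπ).symm

end IsGCDOf

theorem stmt1_general (R : Type*) [CommRing R] [IsDomain R]
    [UniqueFactorizationMonoid R]
    (M : Type*) [AddCommGroup M] [Module R M] (q p : ℕ)
    (A : Matrix (Fin q) (Fin p) R) (π : (Fin p → R) →ₗ[R] M)
    (hsurj : Function.Surjective π)
    (hker : LinearMap.ker π = LinearMap.range A.vecMulLinear)
    (d e : R)
    (hd : IsGCDOf d (fitt0 A : Set R))
    (he : IsGCDOf e (Module.annihilator R M : Set R)) :
    e ∣ d ∧ d ∣ e ^ p :=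
  ⟨he.dvd_of_subset hd (fitt0_le_annihilator hsurj hker),
    he.dvd_pow_of_forall_dvd_pow ⟨0, zero_mem _⟩
      fun _ ha => hd.1 _ (pow_mem_fitt0_of_mem_annihilator hker ha)⟩

theorem stmt1 (R : Type*) [CommRing R] [IsDomain R] [IsNoetherianRing R]
    [UniqueFactorizationMonoid R]
    (M : Type*) [AddCommGroup M] [Module R M] (q p : ℕ)
    (A : Matrix (Fin q) (Fin p) R) (π : (Fin p → R) →ₗ[R] M)
    (hsurj : Function.Surjective π)
    (hker : LinearMap.ker π = LinearMap.range A.vecMulLinear)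
    (d e : R)
    (hd : IsGCDOf d (fitt0 A : Set R))
    (he : IsGCDOf e (Module.annihilator R M : Set R)) :
    e ∣ d ∧ d ∣ e ^ p :=
  stmt1_general R M q p A π hsurj hker d e hd he
end

section
/- The zeroth Fitting ideal of a finitely presented module over a commutative ring does not depend on the choice of finite presentation. -/
open Matrix

theorem MultilinearMap.map_mem_of_forall_mem_span {R ι M N : Type*} [CommSemiring R] [Fintype ι]
    [DecidableEq ι] [AddCommMonoid M] [Module R M] [AddCommMonoid N] [Module R N]
    (f : MultilinearMap R (fun _ : ι => M) N) {s : Set M} {P : Submodule R N}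
    (hs : ∀ v : ι → M, (∀ i, v i ∈ s) → f v ∈ P) {v : ι → M}
    (hv : ∀ i, v i ∈ Submodule.span R s) : f v ∈ P := by
  suffices key : ∀ t : Finset ι, ∀ v : ι → M, (∀ i, v i ∈ Submodule.span R s) →
      (∀ i ∉ t, v i ∈ s) → f v ∈ P from key Finset.univ v hv (by simp)
  intro t
  induction t using Finset.induction_on with
  | empty => exact fun v _ hvs => hs v fun i => hvs i (Finset.notMem_empty i)
  | insert a t _ ih =>
    intro v hv hvs
    have hspan : Submodule.span R s ≤ P.comap (f.toLinearMap v a) := by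
      refine Submodule.span_le.2 fun y hy => ih _ (fun i => ?_) fun i hi => ?_
      · rcases eq_or_ne i a with rfl | hia
        · simpa using Submodule.subset_span hy
        · simpa [hia] using hv i
      · rcases eq_or_ne i a with rfl | hia
        · simpa using hy
        · simpa [hia] using hvs i (by simp [hia, hi])
    simpa using hspan (hv a)

section

variable {R : Type*} [CommRing R]

def detIdeal {n : Type*} [Fintype n] [DecidableEq n] (K : Submodule R (n → R)) : Ideal R :=
  Ideal.span (det '' {N : Matrix n n R | ∀ i, N i ∈ K})

theorem det_mem_detIdeal {n : Type*} [Fintype n] [DecidableEq n] {K : Submodule R (n → R)}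
    {N : Matrix n n R} (hN : ∀ i, N i ∈ K) : N.det ∈ detIdeal K :=
  Ideal.subset_span ⟨N, hN, rfl⟩

theorem fitt0_eq_detIdeal {q p : ℕ} (A : Matrix (Fin q) (Fin p) R) :
    fitt0 A = detIdeal (LinearMap.range A.vecMulLinear) := by
  rw [range_vecMulLinear]
  refine le_antisymm (Ideal.span_le.2 ?_) (Ideal.span_le.2 ?_)
  · rintro _ ⟨r, rfl⟩
    exact det_mem_detIdeal fun i => Submodule.subset_span ⟨r i, rfl⟩
  · rintro _ ⟨N, hN, rfl⟩
    refine (detRowAlternating : (Fin p → R) [⋀^Fin p]→ₗ[R] R).toMultilinearMap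
      |>.map_mem_of_forall_mem_span (fun v hv => ?_) hN
    choose r hr using hv
    obtain rfl : v = A.submatrix r id := funext fun i => (hr i).symm
    change (A.submatrix r id).det ∈ fitt0 A
    by_cases hinj : Function.Injective r
    · exact Ideal.subset_span ⟨⟨r, hinj⟩, rfl⟩
    · obtain ⟨i, j, hij, hne⟩ := Function.not_injective_iff.1 hinj
      rw [det_zero_of_row_eq hne (congrArg A hij)]
      exact Ideal.zero_mem _

theorem detIdeal_map_le {n : Type*} [Fintype n] [DecidableEq n] (K : Submodule R (n → R))
    (f : (n → R) →ₗ[R] (n → R)) : detIdeal (K.map f) ≤ detIdeal K := by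
  refine Ideal.span_le.2 ?_
  rintro _ ⟨N, hN, rfl⟩
  choose v hv hfv using fun i => Submodule.mem_map.1 (hN i)
  have hN : N = Matrix.of v * (LinearMap.toMatrix' f)ᵀ := by
    ext i j
    rw [← hfv, ← LinearMap.toMatrix'_mulVec]
    simp [Matrix.mul_apply, mulVec, dotProduct, mul_comm]
  rw [hN, det_mul]
  exact Ideal.mul_mem_right _ _ (det_mem_detIdeal hv)

theorem detIdeal_comap_linearEquiv {n : Type*} [Fintype n] [DecidableEq n]
    (K : Submodule R (n → R)) (e : (n → R) ≃ₗ[R] (n → R)) :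
    detIdeal (K.comap (e : (n → R) →ₗ[R] (n → R))) = detIdeal K := by
  refine le_antisymm ?_ ?_
  · rw [Submodule.comap_equiv_eq_map_symm]
    exact detIdeal_map_le K _
  · conv_lhs => rw [← Submodule.map_comap_eq_of_surjective e.surjective K]
    exact detIdeal_map_le _ _

theorem detIdeal_comap_funLeft {m n : Type*} [Fintype m] [DecidableEq m] [Fintype n]
    [DecidableEq n] (K : Submodule R (m → R)) (e : m ≃ n) :
    detIdeal (K.comap (LinearMap.funLeft R R e)) = detIdeal K := by
  refine le_antisymm (Ideal.span_le.2 ?_) (Ideal.span_le.2 ?_)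
  · rintro _ ⟨N, hN, rfl⟩
    rw [← det_submatrix_equiv_self e]
    exact det_mem_detIdeal fun i => hN (e i)
  · rintro _ ⟨N, hN, rfl⟩
    rw [← det_submatrix_equiv_self e.symm]
    refine det_mem_detIdeal fun i => ?_
    simpa [Submodule.mem_comap, LinearMap.funLeft, Function.comp_def] using hN (e.symm i)

theorem detIdeal_comap_castSucc {m : ℕ} (L : Submodule R (Fin m → R)) :
    detIdeal (L.comap (LinearMap.funLeft R R Fin.castSucc)) = detIdeal L := by
  refine le_antisymm (Ideal.span_le.2 ?_) (Ideal.span_le.2 ?_)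
  · rintro _ ⟨N, hN, rfl⟩
    rw [det_succ_column N (Fin.last m)]
    refine Ideal.sum_mem _ fun i _ => Ideal.mul_mem_left _ _ (det_mem_detIdeal fun r => ?_)
    rw [Fin.succAbove_last]
    exact hN (i.succAbove r)
  · rintro _ ⟨N, hN, rfl⟩
    -- the block matrix `diag(N, 1)`
    let N' : Matrix (Fin (m + 1)) (Fin (m + 1)) R :=
      Matrix.of (Fin.lastCases (Pi.single (Fin.last m) 1) fun i => Fin.snoc (N i) 0)
    have hN' : N'.det = N.det := by
      rw [det_succ_row N' (Fin.last m), Fintype.sum_eq_single (Fin.last m)]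
      · have : N'.submatrix Fin.castSucc Fin.castSucc = N := by
          ext i j
          simp [N']
        simp [N', Fin.succAbove_last, this]
      · intro j hj
        simp [N', hj]
    rw [← hN']
    refine det_mem_detIdeal fun i => Submodule.mem_comap.2 ?_
    induction i using Fin.lastCases with
    | last =>
      convert L.zero_mem using 1
      ext j
      simp [N']
    | cast i =>
      convert hN i using 1
      ext j
      simp [N']

theorem detIdeal_comap_castAdd {p : ℕ} (K : Submodule R (Fin p → R)) (k : ℕ) :
    detIdeal (K.comap (LinearMap.funLeft R R (Fin.castAdd k))) = detIdeal K := by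
  induction k with
  | zero => rfl
  | succ k ih =>
    rw [← ih, ← detIdeal_comap_castSucc (K.comap (LinearMap.funLeft R R (Fin.castAdd k)))]
    rfl

def shear {p k : ℕ} (θ : (Fin k → R) →ₗ[R] (Fin p → R)) :
    (Fin (p + k) → R) ≃ₗ[R] (Fin (p + k) → R) where
  toFun v := Fin.append (v ∘ Fin.castAdd k + θ (v ∘ Fin.natAdd p)) (v ∘ Fin.natAdd p)
  invFun v := Fin.append (v ∘ Fin.castAdd k - θ (v ∘ Fin.natAdd p)) (v ∘ Fin.natAdd p)
  map_add' v w := by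
    ext i
    refine Fin.addCases (fun i => ?_) (fun j => ?_) i
    · simp only [Pi.add_comp, map_add, Fin.append_left, Pi.add_apply]
      abel
    · simp
  map_smul' c v := by
    ext i
    refine Fin.addCases (fun i => ?_) (fun j => ?_) i
    · simp only [Pi.smul_comp, map_smul, Fin.append_left, Pi.add_apply, Pi.smul_apply, smul_add,
        RingHom.id_apply]
    · simp
  left_inv v := by
    ext i
    refine Fin.addCases (fun i => ?_) (fun j => ?_) i <;> simp [Function.comp_def]
  right_inv v := by
    ext i
    refine Fin.addCases (fun i => ?_) (fun j => ?_) i <;> simp [Function.comp_def]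

theorem funLeft_castAdd_shear {p k : ℕ} (θ : (Fin k → R) →ₗ[R] (Fin p → R))
    (v : Fin (p + k) → R) :
    LinearMap.funLeft R R (Fin.castAdd k) (shear θ v) =
      LinearMap.funLeft R R (Fin.castAdd k) v + θ (LinearMap.funLeft R R (Fin.natAdd p) v) := by
  ext i
  exact Fin.append_left _ _ i

variable {M : Type*} [AddCommGroup M] [Module R M]

def finCoprod {p k : ℕ} (π : (Fin p → R) →ₗ[R] M) (π' : (Fin k → R) →ₗ[R] M) :
    (Fin (p + k) → R) →ₗ[R] M :=
  π ∘ₗ LinearMap.funLeft R R (Fin.castAdd k) + π' ∘ₗ LinearMap.funLeft R R (Fin.natAdd p)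

theorem finCoprod_comp_funLeft_finAddFlip {p k : ℕ} (π : (Fin p → R) →ₗ[R] M)
    (π' : (Fin k → R) →ₗ[R] M) :
    finCoprod π π' ∘ₗ LinearMap.funLeft R R finAddFlip = finCoprod π' π := by
  refine LinearMap.ext fun v => ?_
  simp only [finCoprod, LinearMap.add_apply, LinearMap.comp_apply]
  rw [add_comm]
  congr 2 <;> ext i <;> simp

theorem finCoprod_eq_comp_shear {p k : ℕ} {π : (Fin p → R) →ₗ[R] M} {π' : (Fin k → R) →ₗ[R] M}
    {θ : (Fin k → R) →ₗ[R] (Fin p → R)} (hθ : π ∘ₗ θ = π') :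
    finCoprod π π' = π ∘ₗ LinearMap.funLeft R R (Fin.castAdd k) ∘ₗ (shear θ).toLinearMap := by
  refine LinearMap.ext fun v => ?_
  simp [finCoprod, funLeft_castAdd_shear, ← hθ]

theorem detIdeal_ker_finCoprod {p k : ℕ} {π : (Fin p → R) →ₗ[R] M} (hπ : Function.Surjective π)
    (π' : (Fin k → R) →ₗ[R] M) :
    detIdeal (LinearMap.ker (finCoprod π π')) = detIdeal (LinearMap.ker π) := by
  obtain ⟨θ, hθ⟩ := Module.projective_lifting_property π π' hπ
  rw [finCoprod_eq_comp_shear hθ, LinearMap.ker_comp, Submodule.comap_comp,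
    detIdeal_comap_linearEquiv, detIdeal_comap_castAdd]

end

/-- The zeroth Fitting ideal does not depend on the choice of finite presentation. -/
theorem stmt2 (R : Type*) [CommRing R]
    (M : Type*) [AddCommGroup M] [Module R M]
    (q₁ p₁ q₂ p₂ : ℕ)
    (A₁ : Matrix (Fin q₁) (Fin p₁) R) (π₁ : (Fin p₁ → R) →ₗ[R] M)
    (hsurj₁ : Function.Surjective π₁)
    (hker₁ : LinearMap.ker π₁ = LinearMap.range A₁.vecMulLinear)
    (A₂ : Matrix (Fin q₂) (Fin p₂) R) (π₂ : (Fin p₂ → R) →ₗ[R] M)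
    (hsurj₂ : Function.Surjective π₂)
    (hker₂ : LinearMap.ker π₂ = LinearMap.range A₂.vecMulLinear) :
    fitt0 A₁ = fitt0 A₂ := by
  rw [fitt0_eq_detIdeal, fitt0_eq_detIdeal, ← hker₁, ← hker₂,
    ← detIdeal_ker_finCoprod hsurj₁ π₂, ← detIdeal_ker_finCoprod hsurj₂ π₁,
    ← finCoprod_comp_funLeft_finAddFlip, LinearMap.ker_comp, detIdeal_comap_funLeft]
end

section
/- Let G be a group, u : G → ℝ a nonzero homomorphism, and Z[G]_u the associated Novikov ring. If a ∈ Z[G]_u has support contained in {g : u(g) > 0}, then 1 + a is a unit in Z[G]_u, with inverse Σ_{n≥0} (−a)^n. -/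
open scoped Classical

/-- The Novikov condition defining `ℤ[G]_u`. -/
def NovCond {G : Type*} [Group G] (u : G → ℝ) (f : G → ℤ) : Prop :=
  ∀ C : ℝ, {g : G | f g ≠ 0 ∧ u g ≤ C}.Finite

/-- Convolution product of formal series on `G`. -/
noncomputable def conv {G : Type*} [Group G] (f g : G → ℤ) : G → ℤ :=
  fun k => ∑ᶠ p : G × G, if p.1 * p.2 = k then f p.1 * g p.2 else 0

/-- The series `1`. -/
noncomputable def oneF {G : Type*} [Group G] : G → ℤ :=
  fun g => if g = 1 then 1 else 0

/-- Convolution powers of a series. -/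
noncomputable def convPow {G : Type*} [Group G] (f : G → ℤ) : ℕ → (G → ℤ)
  | 0 => oneF
  | n + 1 => conv (convPow f n) f

/-!
Series supported in `{u ≥ 0}` and satisfying the Novikov condition are closed under convolution,
which is associative on them. If moreover `a` is supported in `{u > 0}`, then on the finite set
`{a ≠ 0, u ≤ C}` the function `u` is bounded below by some `ε > 0`, so every `k` in the support of
`aⁿ` with `u k ≤ C` satisfies `n ε ≤ u k`. Hence only finitely many pairs `(n, k)` with `u k ≤ C`
contribute to `Σ (-a)ⁿ`, all sums may be interchanged, and `(1 + a) Σ (-a)ⁿ` telescopes to `1`.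
-/

open Function Set
open scoped Pointwise

namespace Novikov

theorem finsum_comm_of_finite {α β M : Type*} [AddCommMonoid M] (F : α → β → M)
    (h : (support (uncurry F)).Finite) :
    ∑ᶠ a, ∑ᶠ b, F a b = ∑ᶠ b, ∑ᶠ a, F a b := by
  have h' : (support (uncurry F ∘ Prod.swap)).Finite := by
    rw [support_comp_eq_preimage]
    exact h.preimage Prod.swap_injective.injOn
  calc ∑ᶠ a, ∑ᶠ b, F a b = ∑ᶠ p : α × β, uncurry F p := (finsum_curry _ h).symm
    _ = ∑ᶠ q : β × α, uncurry F q.swap := (finsum_comp_equiv (Equiv.prodComm β α)).symm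
    _ = ∑ᶠ b, ∑ᶠ a, F a b := finsum_curry _ h'

theorem finsum_sub_succ {M : Type*} [AddCommGroup M] (c : ℕ → M) (hc : (support c).Finite) :
    ∑ᶠ n, (c n - c (n + 1)) = c 0 := by
  obtain ⟨N, hN⟩ := hc.bddAbove
  have hvanish : ∀ n, N < n → c n = 0 := fun n hn =>
    notMem_support.1 fun h => (hN h).not_gt hn
  rw [finsum_eq_sum_of_support_subset _ (s := Finset.range (N + 1)), Finset.sum_range_sub',
    hvanish _ (Nat.lt_succ_self N), sub_zero]
  intro n hn
  by_contra hnN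
  simp only [Finset.coe_range, mem_Iio, not_lt] at hnN
  exact hn (by simp only [hvanish n (by omega), hvanish (n + 1) (by omega), sub_zero])

theorem exists_pos_le_of_finite {α : Type*} {s : Set α} (hs : s.Finite) {f : α → ℝ}
    (hf : ∀ x ∈ s, 0 < f x) : ∃ ε > 0, ∀ x ∈ s, ε ≤ f x := by
  rcases s.eq_empty_or_nonempty with rfl | hne
  · exact ⟨1, one_pos, by simp⟩
  · obtain ⟨x₀, hx₀, hmin⟩ := exists_min_image s f hs hne
    exact ⟨f x₀, hf x₀ hx₀, hmin⟩

section Convolution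

variable {G : Type*} [Group G]

theorem conv_apply (f g : G → ℤ) (k : G) : conv f g k = ∑ᶠ x, f x * g (x⁻¹ * k) := by
  set F : G × G → ℤ := fun p => if p.1 * p.2 = k then f p.1 * g p.2 else 0
  have hF : support F ⊆ range fun x => (x, x⁻¹ * k) := by
    rintro ⟨x, y⟩ hxy
    by_cases h : x * y = k
    · exact ⟨x, by simp [← h]⟩
    · simp [F, h] at hxy
  calc conv f g k = ∑ᶠ p ∈ univ, F p := (finsum_mem_univ F).symm
    _ = ∑ᶠ p ∈ range fun x => (x, x⁻¹ * k), F p :=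
        finsum_mem_inter_support_eq F _ _ (by rw [univ_inter, inter_eq_right.2 hF])
    _ = ∑ᶠ x, f x * g (x⁻¹ * k) := by
        rw [finsum_mem_range fun x y h => congrArg Prod.fst h]
        simp [F]

theorem exists_ne_zero_of_conv_ne_zero {f g : G → ℤ} {k : G} (h : conv f g k ≠ 0) :
    ∃ x, f x ≠ 0 ∧ g (x⁻¹ * k) ≠ 0 := by
  rw [conv_apply] at h
  by_contra! h'
  refine h (finsum_eq_zero_of_forall_eq_zero fun x => ?_)
  by_cases hx : f x = 0
  · rw [hx, zero_mul]
  · rw [h' x hx, mul_zero]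

theorem conv_oneF_left (f : G → ℤ) : conv oneF f = f := by
  funext k
  rw [conv_apply, finsum_eq_single _ 1 fun x hx => by simp [oneF, hx]]
  simp [oneF]

theorem conv_oneF_right (f : G → ℤ) : conv f oneF = f := by
  funext k
  rw [conv_apply, finsum_eq_single _ k fun x hx => by simp [oneF, inv_mul_eq_one, hx]]
  simp [oneF]

theorem conv_const_mul_right (f g : G → ℤ) (c : ℤ) (k : G) :
    conv f (fun y => c * g y) k = c * conv f g k := by
  simp only [conv_apply, mul_finsum]
  exact finsum_congr fun x => by ring

theorem conv_const_mul_left (f g : G → ℤ) (c : ℤ) (k : G) :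
    conv (fun y => c * f y) g k = c * conv f g k := by
  simp only [conv_apply, mul_finsum]
  exact finsum_congr fun x => by ring

theorem conv_add_left {f₁ f₂ g : G → ℤ} {k : G}
    (h₁ : (support fun x => f₁ x * g (x⁻¹ * k)).Finite)
    (h₂ : (support fun x => f₂ x * g (x⁻¹ * k)).Finite) :
    conv (f₁ + f₂) g k = conv f₁ g k + conv f₂ g k := by
  simp only [conv_apply, Pi.add_apply, add_mul]
  exact finsum_add_distrib h₁ h₂

theorem conv_add_right {f g₁ g₂ : G → ℤ} {k : G}
    (h₁ : (support fun x => f x * g₁ (x⁻¹ * k)).Finite)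
    (h₂ : (support fun x => f x * g₂ (x⁻¹ * k)).Finite) :
    conv f (g₁ + g₂) k = conv f g₁ k + conv f g₂ k := by
  simp only [conv_apply, Pi.add_apply, mul_add]
  exact finsum_add_distrib h₁ h₂

theorem conv_finsum_right {ι : Type*} (f : G → ℤ) (F : ι → G → ℤ) (k : G)
    (h : (support fun p : G × ι => f p.1 * F p.2 (p.1⁻¹ * k)).Finite) :
    conv f (fun y => ∑ᶠ i, F i y) k = ∑ᶠ i, conv f (F i) k := by
  simp only [conv_apply, mul_finsum]
  exact finsum_comm_of_finite _ h

theorem conv_finsum_left {ι : Type*} (F : ι → G → ℤ) (g : G → ℤ) (k : G)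
    (h : (support fun p : G × ι => F p.2 p.1 * g (p.1⁻¹ * k)).Finite) :
    conv (fun y => ∑ᶠ i, F i y) g k = ∑ᶠ i, conv (F i) g k := by
  simp only [conv_apply, finsum_mul]
  exact finsum_comm_of_finite _ h

end Convolution

section NonnegSupport

variable {G : Type*} [Group G] {u : G → ℝ}

theorem apply_one_eq_zero (hu : ∀ x y : G, u (x * y) = u x + u y) : u 1 = 0 := by
  have := hu 1 1
  rw [one_mul] at this
  linarith

theorem apply_inv_mul (hu : ∀ x y : G, u (x * y) = u x + u y) (x k : G) :
    u (x⁻¹ * k) = u k - u x := by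
  have := hu x (x⁻¹ * k)
  rw [mul_inv_cancel_left] at this
  linarith

def NovNonneg (u : G → ℝ) (f : G → ℤ) : Prop :=
  NovCond u f ∧ ∀ g, f g ≠ 0 → 0 ≤ u g

theorem novNonneg_oneF (hu : ∀ x y : G, u (x * y) = u x + u y) : NovNonneg u oneF := by
  have hsupp : ∀ g : G, (oneF : G → ℤ) g ≠ 0 → g = 1 := fun g hg => by
    by_contra h
    simp [oneF, h] at hg
  refine ⟨fun C => (finite_singleton 1).subset fun g hg => hsupp g hg.1, fun g hg => ?_⟩
  rw [hsupp g hg, apply_one_eq_zero hu]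

theorem NovNonneg.add {f g : G → ℤ} (hf : NovNonneg u f) (hg : NovNonneg u g) :
    NovNonneg u (f + g) := by
  have hsupp : ∀ x, (f + g) x ≠ 0 → f x ≠ 0 ∨ g x ≠ 0 := fun x hx => by
    by_contra! h
    simp [h.1, h.2] at hx
  refine ⟨fun C => ((hf.1 C).union (hg.1 C)).subset fun x ⟨hx, hxC⟩ => ?_, fun x hx => ?_⟩
  · exact (hsupp x hx).imp (⟨·, hxC⟩) (⟨·, hxC⟩)
  · exact (hsupp x hx).elim (hf.2 x) (hg.2 x)

theorem finite_support_conv_summand (hu : ∀ x y : G, u (x * y) = u x + u y) {f g : G → ℤ}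
    (hf : NovCond u f) (hg : ∀ y, g y ≠ 0 → 0 ≤ u y) (k : G) :
    (support fun x => f x * g (x⁻¹ * k)).Finite := by
  refine (hf (u k)).subset fun x hx => ?_
  have hgx := hg _ (right_ne_zero_of_mul hx)
  rw [apply_inv_mul hu] at hgx
  exact ⟨left_ne_zero_of_mul hx, by linarith⟩

theorem NovNonneg.conv (hu : ∀ x y : G, u (x * y) = u x + u y) {f g : G → ℤ}
    (hf : NovNonneg u f) (hg : NovNonneg u g) : NovNonneg u (conv f g) := by
  have key : ∀ k, _root_.conv f g k ≠ 0 → ∃ x, f x ≠ 0 ∧ g (x⁻¹ * k) ≠ 0 ∧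
      0 ≤ u x ∧ u x ≤ u k := fun k hk => by
    obtain ⟨x, hfx, hgx⟩ := exists_ne_zero_of_conv_ne_zero hk
    have := hg.2 _ hgx
    rw [apply_inv_mul hu] at this
    exact ⟨x, hfx, hgx, hf.2 x hfx, by linarith⟩
  refine ⟨fun C => ((hf.1 C).mul (hg.1 C)).subset fun k ⟨hk, hkC⟩ => ?_, fun k hk => ?_⟩
  · obtain ⟨x, hfx, hgx, hx0, hxk⟩ := key k hk
    refine ⟨x, ⟨hfx, by linarith⟩, x⁻¹ * k, ⟨hgx, ?_⟩, mul_inv_cancel_left x k⟩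
    rw [apply_inv_mul hu]
    linarith
  · obtain ⟨x, -, -, hx0, hxk⟩ := key k hk
    linarith

theorem conv_assoc (hu : ∀ x y : G, u (x * y) = u x + u y) {f g h : G → ℤ}
    (hf : NovNonneg u f) (hg : NovNonneg u g) (hh : ∀ z, h z ≠ 0 → 0 ≤ u z) :
    conv (conv f g) h = conv f (conv g h) := by
  funext k
  -- nonzero terms have `u x, u (x⁻¹ * z) ≤ u k`, so `(x, x⁻¹ * z)` ranges over a finite set
  have hfin : (support (uncurry fun z x => f x * g (x⁻¹ * z) * h (z⁻¹ * k))).Finite := by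
    refine (((hf.1 (u k)).prod (hg.1 (u k))).image fun p => (p.1 * p.2, p.1)).subset ?_
    rintro ⟨z, x⟩ hzx
    have hfx := left_ne_zero_of_mul (left_ne_zero_of_mul hzx)
    have hgx := right_ne_zero_of_mul (left_ne_zero_of_mul hzx)
    have hhz := right_ne_zero_of_mul hzx
    have h1 := hf.2 _ hfx
    have h2 := hg.2 _ hgx
    have h3 := hh _ hhz
    rw [apply_inv_mul hu] at h2 h3
    refine ⟨(x, x⁻¹ * z), ⟨⟨hfx, by linarith⟩, hgx, ?_⟩, by simp⟩
    rw [apply_inv_mul hu]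
    linarith
  calc conv (conv f g) h k = ∑ᶠ z, ∑ᶠ x, f x * g (x⁻¹ * z) * h (z⁻¹ * k) := by
        simp only [conv_apply, finsum_mul]
    _ = ∑ᶠ x, ∑ᶠ z, f x * g (x⁻¹ * z) * h (z⁻¹ * k) := finsum_comm_of_finite _ hfin
    _ = ∑ᶠ x, ∑ᶠ y, f x * (g y * h (y⁻¹ * (x⁻¹ * k))) := finsum_congr fun x => by
        rw [← finsum_comp_equiv (Equiv.mulLeft x)]
        simp [mul_assoc]
    _ = conv f (conv g h) k := by
        simp only [conv_apply, mul_finsum]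

end NonnegSupport

section Powers

variable {G : Type*} [Group G] {u : G → ℝ} {a : G → ℤ}

theorem novNonneg_convPow (hu : ∀ x y : G, u (x * y) = u x + u y) (ha : NovNonneg u a) :
    ∀ n, NovNonneg u (convPow a n)
  | 0 => novNonneg_oneF hu
  | n + 1 => (novNonneg_convPow hu ha n).conv hu ha

theorem conv_convPow (hu : ∀ x y : G, u (x * y) = u x + u y) (ha : NovNonneg u a) (n : ℕ) :
    conv a (convPow a n) = convPow a (n + 1) := by
  induction n with
  | zero =>
    change conv a oneF = conv oneF a
    rw [conv_oneF_right, conv_oneF_left]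
  | succ n ih =>
    change conv a (conv (convPow a n) a) = conv (convPow a (n + 1)) a
    rw [← conv_assoc hu ha (novNonneg_convPow hu ha n) ha.2, ih]

theorem conv_oneF_add_convPow (hu : ∀ x y : G, u (x * y) = u x + u y) (ha : NovNonneg u a)
    (n : ℕ) (k : G) :
    conv (oneF + a) (convPow a n) k = convPow a n k + convPow a (n + 1) k := by
  have hn := (novNonneg_convPow hu ha n).2
  rw [conv_add_left (finite_support_conv_summand hu (novNonneg_oneF hu).1 hn k)
    (finite_support_conv_summand hu ha.1 hn k), conv_oneF_left, conv_convPow hu ha]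

theorem conv_convPow_oneF_add (hu : ∀ x y : G, u (x * y) = u x + u y) (ha : NovNonneg u a)
    (n : ℕ) (k : G) :
    conv (convPow a n) (oneF + a) k = convPow a n k + convPow a (n + 1) k := by
  have hn := (novNonneg_convPow hu ha n).1
  rw [conv_add_right (finite_support_conv_summand hu hn (novNonneg_oneF hu).2 k)
    (finite_support_conv_summand hu hn ha.2 k), conv_oneF_right]
  rfl

theorem mul_le_of_convPow_ne_zero (hu : ∀ x y : G, u (x * y) = u x + u y)
    (ha : NovNonneg u a) {C ε : ℝ} (hε : ∀ g, a g ≠ 0 → u g ≤ C → ε ≤ u g) {n : ℕ} {k : G}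
    (hk : convPow a n k ≠ 0) (hkC : u k ≤ C) : n * ε ≤ u k := by
  induction n generalizing k with
  | zero => simpa using (novNonneg_convPow hu ha 0).2 k hk
  | succ n ih =>
    obtain ⟨x, hx, hax⟩ := exists_ne_zero_of_conv_ne_zero (f := convPow a n) (g := a) hk
    have hx0 := (novNonneg_convPow hu ha n).2 x hx
    have hax0 := ha.2 _ hax
    rw [apply_inv_mul hu] at hax0
    have hxε := ih hx (by linarith)
    have haxε := hε _ hax (by rw [apply_inv_mul hu]; linarith)
    rw [apply_inv_mul hu] at haxε
    push_cast
    linarith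

theorem finite_convPow_support (hu : ∀ x y : G, u (x * y) = u x + u y) (ha : NovCond u a)
    (hsupp : ∀ g, a g ≠ 0 → 0 < u g) (C : ℝ) :
    {p : ℕ × G | convPow a p.1 p.2 ≠ 0 ∧ u p.2 ≤ C}.Finite := by
  have ha' : NovNonneg u a := ⟨ha, fun g hg => (hsupp g hg).le⟩
  obtain ⟨ε, hε0, hε⟩ := exists_pos_le_of_finite (ha C) (f := u) fun g hg => hsupp g hg.1
  set N := ⌈C / ε⌉₊
  refine ((finite_Iic N).prod ((finite_Iic N).biUnion fun n _ =>
    (novNonneg_convPow hu ha' n).1 C)).subset ?_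
  rintro ⟨n, k⟩ ⟨hk, hkC⟩
  have hnε := mul_le_of_convPow_ne_zero hu ha' (fun g hg hgC => hε g ⟨hg, hgC⟩) hk hkC
  have hn : n ≤ N := by
    refine Nat.cast_le.mp (le_trans ?_ (Nat.le_ceil (C / ε)))
    rw [le_div_iff₀ hε0]
    linarith
  exact ⟨hn, mem_biUnion hn ⟨hk, hkC⟩⟩

end Powers

section NeumannSeries

variable {G : Type*} [Group G] {u : G → ℝ} {a : G → ℤ}

noncomputable def neumannSeries (a : G → ℤ) : G → ℤ :=
  fun k => ∑ᶠ n : ℕ, (-1) ^ n * convPow a n k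

theorem finite_setOf_convPow_ne_zero (hu : ∀ x y : G, u (x * y) = u x + u y)
    (ha : NovCond u a) (hsupp : ∀ g, a g ≠ 0 → 0 < u g) (k : G) :
    {n | convPow a n k ≠ 0}.Finite :=
  ((finite_convPow_support hu ha hsupp (u k)).image Prod.fst).subset fun n hn =>
    ⟨(n, k), ⟨hn, le_rfl⟩, rfl⟩

theorem novCond_neumannSeries (hu : ∀ x y : G, u (x * y) = u x + u y)
    (ha : NovCond u a) (hsupp : ∀ g, a g ≠ 0 → 0 < u g) : NovCond u (neumannSeries a) := by
  refine fun C => ((finite_convPow_support hu ha hsupp C).image Prod.snd).subset ?_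
  rintro k ⟨hk, hkC⟩
  obtain ⟨n, hn⟩ : ∃ n, convPow a n k ≠ 0 := by
    by_contra! h
    exact hk (finsum_eq_zero_of_forall_eq_zero fun n => by simp [h n])
  exact ⟨(n, k), ⟨hn, hkC⟩, rfl⟩

theorem finsum_neg_one_pow_mul_convPow_add_succ (hu : ∀ x y : G, u (x * y) = u x + u y)
    (ha : NovCond u a) (hsupp : ∀ g, a g ≠ 0 → 0 < u g) (k : G) :
    ∑ᶠ n : ℕ, (-1) ^ n * (convPow a n k + convPow a (n + 1) k) = oneF k := by
  have htele := finsum_sub_succ (fun n => (-1) ^ n * convPow a n k)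
    ((finite_setOf_convPow_ne_zero hu ha hsupp k).subset fun n hn => right_ne_zero_of_mul hn)
  rw [pow_zero, one_mul] at htele
  change _ = convPow a 0 k
  rw [← htele]
  exact finsum_congr fun n => by ring

theorem conv_oneF_add_neumannSeries (hu : ∀ x y : G, u (x * y) = u x + u y)
    (ha : NovCond u a) (hsupp : ∀ g, a g ≠ 0 → 0 < u g) :
    conv (oneF + a) (neumannSeries a) = oneF := by
  funext k
  have ha' : NovNonneg u a := ⟨ha, fun g hg => (hsupp g hg).le⟩
  have h1a := (novNonneg_oneF hu).add ha'
  have hfin : (support fun p : G × ℕ =>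
      ((oneF : G → ℤ) + a) p.1 * ((-1) ^ p.2 * convPow a p.2 (p.1⁻¹ * k))).Finite := by
    refine ((h1a.1 (u k)).prod
      ((finite_convPow_support hu ha hsupp (u k)).image Prod.fst)).subset ?_
    rintro ⟨x, n⟩ hxn
    have hx := left_ne_zero_of_mul hxn
    have hn := right_ne_zero_of_mul (right_ne_zero_of_mul hxn)
    have hx0 := h1a.2 x hx
    have hn0 := (novNonneg_convPow hu ha' n).2 _ hn
    rw [apply_inv_mul hu] at hn0
    refine ⟨⟨hx, by linarith⟩, (n, x⁻¹ * k), ⟨hn, ?_⟩, rfl⟩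
    rw [apply_inv_mul hu]
    linarith
  calc conv (oneF + a) (neumannSeries a) k
      = ∑ᶠ n : ℕ, conv (oneF + a) (fun y => (-1) ^ n * convPow a n y) k :=
        conv_finsum_right _ _ k hfin
    _ = ∑ᶠ n : ℕ, (-1) ^ n * (convPow a n k + convPow a (n + 1) k) := finsum_congr fun n => by
        rw [conv_const_mul_right, conv_oneF_add_convPow hu ha']
    _ = oneF k := finsum_neg_one_pow_mul_convPow_add_succ hu ha hsupp k

theorem conv_neumannSeries_oneF_add (hu : ∀ x y : G, u (x * y) = u x + u y)
    (ha : NovCond u a) (hsupp : ∀ g, a g ≠ 0 → 0 < u g) :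
    conv (neumannSeries a) (oneF + a) = oneF := by
  funext k
  have ha' : NovNonneg u a := ⟨ha, fun g hg => (hsupp g hg).le⟩
  have h1a := (novNonneg_oneF hu).add ha'
  have hfin : (support fun p : G × ℕ =>
      (-1) ^ p.2 * convPow a p.2 p.1 * ((oneF : G → ℤ) + a) (p.1⁻¹ * k)).Finite := by
    refine ((finite_convPow_support hu ha hsupp (u k)).image Prod.swap).subset ?_
    rintro ⟨x, n⟩ hxn
    have hn := right_ne_zero_of_mul (left_ne_zero_of_mul hxn)
    have hx0 := h1a.2 _ (right_ne_zero_of_mul hxn)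
    rw [apply_inv_mul hu] at hx0
    exact ⟨(n, x), ⟨hn, by linarith⟩, rfl⟩
  calc conv (neumannSeries a) (oneF + a) k
      = ∑ᶠ n : ℕ, conv (fun y => (-1) ^ n * convPow a n y) (oneF + a) k :=
        conv_finsum_left _ _ k hfin
    _ = ∑ᶠ n : ℕ, (-1) ^ n * (convPow a n k + convPow a (n + 1) k) := finsum_congr fun n => by
        rw [conv_const_mul_left, conv_convPow_oneF_add hu ha']
    _ = oneF k := finsum_neg_one_pow_mul_convPow_add_succ hu ha hsupp k

end NeumannSeries

end Novikov

theorem stmt4_general (G : Type*) [Group G] (u : G → ℝ)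
    (hu : ∀ a b : G, u (a * b) = u a + u b)
    (a : G → ℤ) (ha : NovCond u a) (hsupp : ∀ g : G, a g ≠ 0 → 0 < u g) :
    -- the series `Σ_{n ≥ 0} (-a)^n` makes sense: each group element receives only
    -- finitely many contributions
    (∀ k : G, {n : ℕ | convPow a n k ≠ 0}.Finite) ∧
    NovCond u (fun k => ∑ᶠ n : ℕ, (-1) ^ n * convPow a n k) ∧
    -- `1 + a` is a unit with inverse `Σ_{n ≥ 0} (-a)^n`
    conv (oneF + a) (fun k => ∑ᶠ n : ℕ, (-1) ^ n * convPow a n k) = oneF ∧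
    conv (fun k => ∑ᶠ n : ℕ, (-1) ^ n * convPow a n k) (oneF + a) = oneF :=
  ⟨Novikov.finite_setOf_convPow_ne_zero hu ha hsupp, Novikov.novCond_neumannSeries hu ha hsupp,
    Novikov.conv_oneF_add_neumannSeries hu ha hsupp,
    Novikov.conv_neumannSeries_oneF_add hu ha hsupp⟩

theorem stmt4 (G : Type*) [Group G] (u : G → ℝ)
    (hu : ∀ a b : G, u (a * b) = u a + u b) (hu0 : u ≠ 0)
    (a : G → ℤ) (ha : NovCond u a) (hsupp : ∀ g : G, a g ≠ 0 → 0 < u g) :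
    -- the series `Σ_{n ≥ 0} (-a)^n` makes sense: each group element receives only
    -- finitely many contributions
    (∀ k : G, {n : ℕ | convPow a n k ≠ 0}.Finite) ∧
    NovCond u (fun k => ∑ᶠ n : ℕ, (-1) ^ n * convPow a n k) ∧
    -- `1 + a` is a unit with inverse `Σ_{n ≥ 0} (-a)^n`
    conv (oneF + a) (fun k => ∑ᶠ n : ℕ, (-1) ^ n * convPow a n k) = oneF ∧
    conv (fun k => ∑ᶠ n : ℕ, (-1) ^ n * convPow a n k) (oneF + a) = oneF :=
  stmt4_general G u hu a ha hsupp
end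

section
/- For coprime positive integers r and s, the polynomials 1 + t + ⋯ + t^{r−1} and 1 + t + ⋯ + t^{s−1} generate the unit ideal in ℤ[t]: there exist U, V ∈ ℤ[t] with U·(1 + t + ⋯ + t^{r−1}) + V·(1 + t + ⋯ + t^{s−1}) = 1. -/
open Polynomial

private lemma aux8 : ∀ m n : ℕ, ∃ A B : Polynomial ℤ,
    A * (X ^ m - 1) + B * (X ^ n - 1) = X ^ Nat.gcd m n - 1 := by
  intro m n
  induction m, n using Nat.gcd.induction with
  | H0 n => exact ⟨0, 1, by simp⟩
  | H1 m n hm ih =>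
    obtain ⟨A, B, h⟩ := ih
    refine ⟨B - A * (X ^ (n % m) * ∑ i ∈ Finset.range (n / m), (X ^ m) ^ i), A, ?_⟩
    rw [Nat.gcd_rec, ← h]
    have key : (X : Polynomial ℤ) ^ n - 1 =
        X ^ (n % m) * ((∑ i ∈ Finset.range (n / m), (X ^ m) ^ i) * (X ^ m - 1)) +
          (X ^ (n % m) - 1) := by
      rw [geom_sum_mul, ← pow_mul]
      have : m * (n / m) + n % m = n := Nat.div_add_mod n m
      calc (X : Polynomial ℤ) ^ n - 1
          = X ^ (m * (n / m) + n % m) - 1 := by rw [this]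
        _ = X ^ (n % m) * (X ^ (m * (n / m)) - 1) + (X ^ (n % m) - 1) := by
            rw [pow_add]; ring
    rw [key]; ring

/-- For coprime `r, s`, the repunit polynomials `1 + t + ⋯ + t^{r-1}` and
`1 + t + ⋯ + t^{s-1}` generate the unit ideal of `ℤ[t]`. -/
theorem stmt8 (r s : ℕ) (hr : 0 < r) (hs : 0 < s) (hrs : Nat.Coprime r s) :
    ∃ U V : Polynomial ℤ,
      U * (∑ i ∈ Finset.range r, X ^ i) + V * (∑ i ∈ Finset.range s, X ^ i) = 1 := by
  obtain ⟨A, B, h⟩ := aux8 r s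
  rw [hrs, pow_one] at h
  refine ⟨A, B, ?_⟩
  have hX : (X : Polynomial ℤ) - 1 ≠ 0 := by
    intro h'
    have := congrArg (fun p => p.coeff 1) h'
    simp [coeff_one] at this
  apply mul_right_cancel₀ hX
  rw [one_mul, add_mul, mul_assoc, mul_assoc, geom_sum_mul, geom_sum_mul, h]
end

section
/- Let G be a group such that ℤ[G] has finitely detectable full left ideals (every left ideal projecting onto ℤ[G/H] for all finite-index normal subgroups H equals ℤ[G]). Then every left ℤ[G]-submodule M of ℤ[G]^n which projects onto ℤ[G/H]^n for every finite-index normal subgroup H of G equals ℤ[G]^n. -/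
/-- `ℤ[G]` has finitely detectable full left ideals: every left ideal whose image in
`ℤ[G/H]` is everything, for all finite-index normal subgroups `H`, is all of `ℤ[G]`. -/
def FinitelyDetectableFullLeftIdeals (G : Type*) [Group G] : Prop :=
  ∀ I : Ideal (MonoidAlgebra ℤ G),
    (∀ (H : Subgroup G) (hN : H.Normal) (hF : H.FiniteIndex),
      Ideal.map (MonoidAlgebra.mapDomainRingHom ℤ (@QuotientGroup.mk' G _ H hN)) I = ⊤) →
    I = ⊤

theorem stmt13 (G : Type*) [Group G] (hG : FinitelyDetectableFullLeftIdeals G)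
    (n : ℕ) (M : Submodule (MonoidAlgebra ℤ G) (Fin n → MonoidAlgebra ℤ G))
    (h : ∀ (H : Subgroup G) (hN : H.Normal) (hF : H.FiniteIndex),
      ∀ y : Fin n → MonoidAlgebra ℤ (G ⧸ H), ∃ m ∈ M,
        (fun i => MonoidAlgebra.mapDomainRingHom ℤ (@QuotientGroup.mk' G _ H hN) (m i)) = y) :
    M = ⊤ := by
  induction n with
  | zero =>
    rw [eq_top_iff]
    intro v _
    have hv : v = 0 := Subsingleton.elim v 0
    rw [hv]; exact M.zero_mem
  | succ n ih =>
    set R := MonoidAlgebra ℤ G with hR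
    -- the ideal of last coordinates of elements of M
    let π : (Fin (n + 1) → R) →ₗ[R] R := LinearMap.proj (Fin.last n)
    let I : Ideal R := M.map π
    have hI : I = ⊤ := by
      apply hG
      intro H hN hF
      rw [Ideal.eq_top_iff_one]
      obtain ⟨m, hm, hmy⟩ := h H hN hF (Pi.single (Fin.last n) 1)
      have h1 : (MonoidAlgebra.mapDomainRingHom ℤ (@QuotientGroup.mk' G _ H hN))
          (m (Fin.last n)) = 1 := by
        have := congrFun hmy (Fin.last n)
        simpa using this
      rw [← h1]
      exact Ideal.mem_map_of_mem _ ⟨m, hm, rfl⟩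
    obtain ⟨m₀, hm₀, hm₀last⟩ : ∃ m₀ ∈ M, m₀ (Fin.last n) = 1 := by
      have h1 : (1 : R) ∈ I := hI ▸ Submodule.mem_top
      obtain ⟨m₀, hm₀, hm₀1⟩ := h1
      exact ⟨m₀, hm₀, hm₀1⟩
    -- the inclusion of tuples of length n as tuples of length n+1 ending in 0
    let ι : (Fin n → R) →ₗ[R] (Fin (n + 1) → R) :=
      { toFun := fun x => Fin.snoc x 0
        map_add' := by
          intro x y
          funext i
          refine Fin.lastCases ?_ (fun j => ?_) i <;> simp
        map_smul' := by
          intro c x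
          funext i
          refine Fin.lastCases ?_ (fun j => ?_) i <;> simp }
    let M' : Submodule R (Fin n → R) := M.comap ι
    have hM' : M' = ⊤ := by
      apply ih
      intro H hN hF y
      obtain ⟨m, hm, hmy⟩ := h H hN hF (Fin.snoc y 0)
      set f := MonoidAlgebra.mapDomainRingHom ℤ (@QuotientGroup.mk' G _ H hN) with hf
      have hflast : f (m (Fin.last n)) = 0 := by
        have := congrFun hmy (Fin.last n)
        simpa using this
      set m' : Fin (n + 1) → R := m - m (Fin.last n) • m₀ with hm'def
      have hm'M : m' ∈ M := M.sub_mem hm (M.smul_mem _ hm₀)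
      have hm'last : m' (Fin.last n) = 0 := by
        simp [hm'def, hm₀last]
      refine ⟨Fin.init m', ?_, ?_⟩
      · show ι (Fin.init m') ∈ M
        have : ι (Fin.init m') = m' := by
          show (Fin.snoc (Fin.init m') 0 : Fin (n + 1) → R) = m'
          rw [← hm'last, Fin.snoc_init_self]
        rw [this]; exact hm'M
      · funext i
        have hcast : f (m' i.castSucc)
            = f (m i.castSucc) - f (m (Fin.last n)) * f (m₀ i.castSucc) := by
          simp [hm'def, mul_comm]
        have hmi : f (m i.castSucc) = y i := by
          have := congrFun hmy i.castSucc
          simpa using this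
        simp [Fin.init, hcast, hflast, hmi]
    rw [eq_top_iff]
    intro v _
    set w : Fin (n + 1) → R := v - v (Fin.last n) • m₀ with hwdef
    have hwlast : w (Fin.last n) = 0 := by simp [hwdef, hm₀last]
    have hwM : w ∈ M := by
      have hinit : Fin.init w ∈ M' := hM' ▸ Submodule.mem_top
      have : ι (Fin.init w) = w := by
        show (Fin.snoc (Fin.init w) 0 : Fin (n + 1) → R) = w
        rw [← hwlast, Fin.snoc_init_self]
      have h2 := Submodule.mem_comap.mp hinit
      rwa [this] at h2
    have : v = w + v (Fin.last n) • m₀ := by simp [hwdef]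
    rw [this]
    exact M.add_mem hwM (M.smul_mem _ hm₀)
end

section
/- Let G be a group with a bi-invariant total order and u : G → ℝ a nonzero homomorphism such that u(g) > 0 implies g > 1. Then the Novikov ring ℤ[G]_u is contained in the Mal'cev–Neumann ring ℚ⟨G⟩ of formal series with well-ordered support. -/
/-- If `G` carries a bi-invariant total order compatible with `u`
(`u(g) > 0 ⟹ g > 1`), then every element of the Novikov ring `ℤ[G]_u` has
well-ordered support, i.e. `ℤ[G]_u ⊆ ℚ⟨G⟩`, the Mal'cev–Neumann ring of series
with well-ordered support. -/
theorem stmt16 (G : Type*) [Group G] [LinearOrder G]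
    (hbi : ∀ a b c : G, a ≤ b → a * c ≤ b * c ∧ c * a ≤ c * b)
    (u : G → ℝ) (hu : ∀ a b : G, u (a * b) = u a + u b) (hu0 : u ≠ 0)
    (hcompat : ∀ g : G, 0 < u g → 1 < g)
    (f : G → ℤ) (hf : NovCond u f) :
    (Function.support f).IsWF := by
  have hu1 : u 1 = 0 := by
    have := hu 1 1; simp at this; linarith
  have huinv : ∀ g : G, u g⁻¹ = - u g := by
    intro g
    have := hu g g⁻¹
    simp [hu1] at this
    linarith
  -- monotonicity of u
  have hmono : ∀ g h : G, g ≤ h → u g ≤ u h := by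
    intro g h hgh
    by_contra hlt
    push_neg at hlt
    have hpos : 0 < u (g * h⁻¹) := by
      rw [hu, huinv]; linarith
    have h1 : 1 < g * h⁻¹ := hcompat _ hpos
    have := (hbi 1 (g * h⁻¹) h h1.le).1
    simp at this
    exact absurd (le_antisymm hgh this) (by
      intro heq
      rw [heq] at hlt
      exact lt_irrefl _ hlt)
  rw [Set.isWF_iff_no_descending_seq]
  rintro a ha hmem
  have hsub : Set.range a ⊆ {g : G | f g ≠ 0 ∧ u g ≤ u (a 0)} := by
    rintro _ ⟨n, rfl⟩
    exact ⟨hmem n, hmono _ _ (ha.antitone (Nat.zero_le n))⟩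
  exact Set.infinite_of_injective_forall_mem ha.injective
    (fun n => hsub ⟨n, rfl⟩) (hf (u (a 0)))
end

section
/- Let G be a group, N ⊴ G a normal subgroup, and λ an element of ℚ[N]⟨G/N⟩, i.e. a formal series λ = Σ_{t∈T} λ_t t with T a well-ordered subset of a transversal of N in G and each λ_t ∈ ℚ[N] a finitely supported element. Then the projection supp(λ) → G/N has finite fibers, and the induced series λ̄ = Σ λ_t π(t) is a well-defined element of ℚ⟨G/N⟩ (its support in G/N is well-ordered), extending the natural ring homomorphism ℚ[G] → ℚ[G/N]. -/
open scoped Classical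

/-!
Every `g` in the support of `λ` has the form `m * t` with `m ∈ N` and `t ∈ T₀`, and `π g = π t`.
Since `π` is injective on the transversal, the fibre of `supp λ` over `q` lies in `(· * t) '' supp λ_t`
for the unique `t ∈ T₀` over `q` (if any), which is finite. The support of `λ̄` lies in `π '' T₀`, the image
of a well-ordered set under a map that is monotone on it, hence well-ordered. On finitely supported
`p`, summing over the fibres of `π` is exactly `Finsupp.mapDomain π`.
-/

theorem Finsupp.finsum_ite_eq_mapDomain_apply {α β M : Type*} [AddCommMonoid M] [DecidableEq β]
    (f : α → β) (x : α →₀ M) (b : β) :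
    ∑ᶠ a, (if f a = b then x a else 0) = x.mapDomain f b := by
  have hsupp : Function.support (fun a => if f a = b then x a else 0) ⊆ x.support := by
    intro a ha
    rw [Function.mem_support] at ha
    rw [Finset.mem_coe, Finsupp.mem_support_iff]
    exact fun hxa => ha (by simp [hxa])
  rw [finsum_eq_finsetSum_of_support_subset _ hsupp, Finsupp.mapDomain, Finsupp.sum_apply]
  exact Finset.sum_congr rfl fun a _ => by dsimp only; rw [Finsupp.single_apply]

theorem support_finsum_fiber_subset_image {α β M : Type*} [AddCommMonoid M] [DecidableEq β]
    (f : α → β) (x : α → M) :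
    Function.support (fun b => ∑ᶠ a, if f a = b then x a else 0) ⊆ f '' Function.support x := by
  intro b hb
  by_contra hnot
  refine hb (finsum_eq_zero_of_forall_eq_zero fun a => ?_)
  split_ifs with hab
  · by_contra hxa
    exact hnot ⟨a, hxa, hab⟩
  · rfl

section Transversal

open QuotientGroup

variable {G : Type*} [Group G] {N : Subgroup G} [N.Normal] {S T₀ : Set G}

theorem QuotientGroup.mk_mul_of_mem_left {m : G} (hm : m ∈ N) (t : G) :
    (mk (m * t) : G ⧸ N) = mk t := by
  rw [mk_mul, (eq_one_iff m).2 hm, one_mul]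

theorem image_mk_subset_of_subset_mul (hS : ∀ g ∈ S, ∃ t ∈ T₀, ∃ m ∈ N, g = m * t) :
    (mk : G → G ⧸ N) '' S ⊆ mk '' T₀ := by
  rintro _ ⟨g, hg, rfl⟩
  obtain ⟨t, ht, m, hm, rfl⟩ := hS g hg
  exact ⟨t, ht, (mk_mul_of_mem_left hm t).symm⟩

theorem finite_fiber_of_injOn_of_subset_mul (hinj : Set.InjOn (mk : G → G ⧸ N) T₀)
    (hS : ∀ g ∈ S, ∃ t ∈ T₀, ∃ m ∈ N, g = m * t)
    (hfin : ∀ t ∈ T₀, {m : G | m ∈ N ∧ m * t ∈ S}.Finite) (q : G ⧸ N) :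
    {g : G | g ∈ S ∧ (mk g : G ⧸ N) = q}.Finite := by
  have hlift : (T₀ ∩ mk ⁻¹' {q}).Subsingleton :=
    fun t ht t' ht' => hinj ht.1 ht'.1 (ht.2.trans ht'.2.symm)
  refine (hlift.finite.biUnion fun t ht => (hfin t ht.1).image (· * t)).subset ?_
  rintro g ⟨hg, rfl⟩
  obtain ⟨t, ht, m, hm, rfl⟩ := hS g hg
  exact Set.mem_biUnion ⟨ht, (mk_mul_of_mem_left hm t).symm⟩ ⟨m, ⟨hm, hg⟩, rfl⟩

end Transversal

theorem Set.IsWF.image_of_strictMonoOn {α β : Type*} [LinearOrder α] [LinearOrder β]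
    {s : Set α} (hs : s.IsWF) {f : α → β} (hf : StrictMonoOn f s) : (f '' s).IsWF :=
  (hs.isPWO.image_of_monotoneOn hf.monotoneOn).isWF

theorem stmt17_general (G : Type*) [Group G] [LinearOrder G]
    (N : Subgroup G) [N.Normal] [LinearOrder (G ⧸ N)]
    -- `T` is a transversal of `N` in `G` on which the projection is monotone
    (T : Set G)
    (hT : ∀ q : G ⧸ N, ∃! t, t ∈ T ∧ (QuotientGroup.mk t : G ⧸ N) = q)
    (hmono : ∀ t ∈ T, ∀ t' ∈ T, t < t' →
      (QuotientGroup.mk t : G ⧸ N) < QuotientGroup.mk t')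
    -- `λ ∈ ℚ[N]⟨G/N⟩`: a series `Σ_{t ∈ T₀} λ_t t` with `T₀ ⊆ T` well-ordered and
    -- each `λ_t ∈ ℚ[N]` finitely supported
    (lam : G → ℚ)
    (T₀ : Set G) (hT₀T : T₀ ⊆ T) (hT₀ : T₀.IsWF)
    (hsupp : ∀ g : G, lam g ≠ 0 → ∃ t ∈ T₀, ∃ m ∈ N, g = m * t)
    (hfin : ∀ t ∈ T₀, {m : G | m ∈ N ∧ lam (m * t) ≠ 0}.Finite) :
    -- the projection `supp(λ) → G/N` has finite fibers
    (∀ q : G ⧸ N, {g : G | lam g ≠ 0 ∧ (QuotientGroup.mk g : G ⧸ N) = q}.Finite) ∧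
    -- the induced series `λ̄ = Σ λ_t π(t)` has well-ordered support in `G/N`,
    -- i.e. is a well-defined element of `ℚ⟨G/N⟩`
    (Function.support
      (fun q : G ⧸ N => ∑ᶠ g : G,
        if (QuotientGroup.mk g : G ⧸ N) = q then lam g else 0)).IsWF ∧
    -- the map `λ ↦ λ̄` extends the natural ring homomorphism `ℚ[G] → ℚ[G/N]`
    (∀ (p : MonoidAlgebra ℚ G) (q : G ⧸ N),
      (∑ᶠ g : G, if (QuotientGroup.mk g : G ⧸ N) = q then p.coeff g else 0) =
        (MonoidAlgebra.mapDomainRingHom ℚ (QuotientGroup.mk' N) p).coeff q) := by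
  have hinj : Set.InjOn (QuotientGroup.mk : G → G ⧸ N) T₀ :=
    fun t ht t' ht' h => (hT _).unique ⟨hT₀T ht, h⟩ ⟨hT₀T ht', rfl⟩
  have hstrict : StrictMonoOn (QuotientGroup.mk : G → G ⧸ N) T₀ :=
    fun t ht t' ht' h => hmono t (hT₀T ht) t' (hT₀T ht') h
  refine ⟨finite_fiber_of_injOn_of_subset_mul hinj hsupp hfin, ?_, fun p q => ?_⟩
  · exact (hT₀.image_of_strictMonoOn hstrict).mono <|
      (support_finsum_fiber_subset_image _ lam).trans (image_mk_subset_of_subset_mul hsupp)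
  · exact Finsupp.finsum_ite_eq_mapDomain_apply _ p.coeff q

theorem stmt17 (G : Type*) [Group G] [LinearOrder G]
    (hbi : ∀ a b c : G, a ≤ b → a * c ≤ b * c ∧ c * a ≤ c * b)
    (N : Subgroup G) [N.Normal] [LinearOrder (G ⧸ N)]
    -- `T` is a transversal of `N` in `G` on which the projection is monotone
    (T : Set G)
    (hT : ∀ q : G ⧸ N, ∃! t, t ∈ T ∧ (QuotientGroup.mk t : G ⧸ N) = q)
    (hmono : ∀ t ∈ T, ∀ t' ∈ T, t < t' →
      (QuotientGroup.mk t : G ⧸ N) < QuotientGroup.mk t')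
    -- `λ ∈ ℚ[N]⟨G/N⟩`: a series `Σ_{t ∈ T₀} λ_t t` with `T₀ ⊆ T` well-ordered and
    -- each `λ_t ∈ ℚ[N]` finitely supported
    (lam : G → ℚ)
    (T₀ : Set G) (hT₀T : T₀ ⊆ T) (hT₀ : T₀.IsWF)
    (hsupp : ∀ g : G, lam g ≠ 0 → ∃ t ∈ T₀, ∃ m ∈ N, g = m * t)
    (hfin : ∀ t ∈ T₀, {m : G | m ∈ N ∧ lam (m * t) ≠ 0}.Finite) :
    -- the projection `supp(λ) → G/N` has finite fibers
    (∀ q : G ⧸ N, {g : G | lam g ≠ 0 ∧ (QuotientGroup.mk g : G ⧸ N) = q}.Finite) ∧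
    -- the induced series `λ̄ = Σ λ_t π(t)` has well-ordered support in `G/N`,
    -- i.e. is a well-defined element of `ℚ⟨G/N⟩`
    (Function.support
      (fun q : G ⧸ N => ∑ᶠ g : G,
        if (QuotientGroup.mk g : G ⧸ N) = q then lam g else 0)).IsWF ∧
    -- the map `λ ↦ λ̄` extends the natural ring homomorphism `ℚ[G] → ℚ[G/N]`
    (∀ (p : MonoidAlgebra ℚ G) (q : G ⧸ N),
      (∑ᶠ g : G, if (QuotientGroup.mk g : G ⧸ N) = q then p.coeff g else 0) =
        (MonoidAlgebra.mapDomainRingHom ℚ (QuotientGroup.mk' N) p).coeff q) :=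
  stmt17_general G N T hT hmono lam T₀ hT₀T hT₀ hsupp hfin
end

section
/- Let G be a group, u : G → ℝ a homomorphism, and x, y ∈ ℤ[G]_u with x ≠ 0. Suppose that for every α ∈ ℤ[G]_u the u-minimal part of x divides (in ℤ[ker u], modulo multiplication by elements of G) the u-minimal part of y − αx whenever y − αx ≠ 0. Then x divides y in ℤ[G]_u, i.e. there exists α ∈ ℤ[G]_u with y = αx. -/
/-!
Starting from `a = 0`, repeatedly add to the partial quotient `a` the part of the multiplier
supplied by the hypothesis (for the remainder `r = y - a x`) that sits at the single level
`min u(r) - min u(x)`. This cancels the minimal part of `r`, and every new term of the remainder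
lies either higher in `supp r` or exactly one gap `u t - min u(x) > 0` (`t ∈ supp x`) above
`min u(r)`. So the minimal levels of the remainders increase strictly and stay in
`u(supp y) + ⟨gaps⟩`, a set with finitely many elements below any bound because the gaps are
bounded away from `0`; hence they tend to `+∞`, the partial quotients converge to a Novikov
series `α`, and `α x = y`.
-/

open scoped Classical

/-- The minimal value of `u` on the support of a series. -/
noncomputable def minLevel {G : Type*} [Group G] (u : G → ℝ) (f : G → ℤ) : ℝ :=
  sInf (u '' Function.support f)

/-- The `u`-minimal part `m̃_u(f)`: the part of `f` supported on the elements of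
`supp f` where `u` is minimal. -/
noncomputable def minPart {G : Type*} [Group G] (u : G → ℝ) (f : G → ℤ) : G → ℤ :=
  fun g => if u g = minLevel u f then f g else 0

open Set Function
open scoped Pointwise

theorem StrictMono.exists_lt_of_mem_of_finite_inter_Iic {α : Type*} [LinearOrder α]
    {m : ℕ → α} (hm : StrictMono m) {M : Set α} (hmM : ∀ n, m n ∈ M)
    (hM : ∀ C, (M ∩ Iic C).Finite) (C : α) : ∃ n, C < m n := by
  by_contra! h
  exact infinite_range_of_injective hm.injective
    ((hM C).subset (range_subset_iff.2 fun n => ⟨hmM n, h n⟩))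

theorem Set.finite_add_inter_Iic {s t : Set ℝ} {a b : ℝ} (ha : ∀ x ∈ s, a ≤ x)
    (hb : ∀ y ∈ t, b ≤ y) (hs : ∀ C, (s ∩ Iic C).Finite) (ht : ∀ C, (t ∩ Iic C).Finite)
    (C : ℝ) : ((s + t) ∩ Iic C).Finite := by
  refine ((hs (C - b)).add (ht (C - a))).subset ?_
  rintro _ ⟨⟨x, hx, y, hy, rfl⟩, hC : x + y ≤ C⟩
  have := ha x hx
  have := hb y hy
  exact ⟨x, ⟨hx, show x ≤ C - b by linarith⟩, y, ⟨hy, show y ≤ C - a by linarith⟩, rfl⟩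

theorem exists_pos_le_of_finite_inter_Iic {L : Set ℝ} (hpos : ∀ d ∈ L, 0 < d)
    (hL : ∀ C, (L ∩ Iic C).Finite) : ∃ δ > 0, ∀ d ∈ L, δ ≤ d := by
  rcases L.eq_empty_or_nonempty with rfl | ⟨d₀, hd₀⟩
  · exact ⟨1, one_pos, by simp⟩
  obtain ⟨δ, ⟨hδ, -⟩, hmin⟩ := exists_min_image (L ∩ Iic d₀) id (hL d₀) ⟨d₀, hd₀, self_mem_Iic⟩
  refine ⟨δ, hpos δ hδ, fun d hd => ?_⟩
  rcases le_total d d₀ with h | h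
  · exact hmin d ⟨hd, h⟩
  · exact (hmin d₀ ⟨hd₀, self_mem_Iic⟩).trans h

theorem AddSubmonoid.nonneg_of_mem_closure {L : Set ℝ} (hL : ∀ d ∈ L, 0 ≤ d) {s : ℝ}
    (hs : s ∈ closure L) : 0 ≤ s :=
  closure_induction hL le_rfl (fun _ _ _ _ => add_nonneg) hs

theorem AddSubmonoid.finite_closure_inter_Iic {L : Set ℝ} (hpos : ∀ d ∈ L, 0 < d)
    (hL : ∀ C, (L ∩ Iic C).Finite) (C : ℝ) : ((closure L : Set ℝ) ∩ Iic C).Finite := by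
  obtain ⟨δ, hδ, hδL⟩ := exists_pos_le_of_finite_inter_Iic hpos hL
  have hnonneg : ∀ s ∈ closure L, 0 ≤ s := fun _ =>
    nonneg_of_mem_closure fun d hd => (hpos d hd).le
  -- a nonzero element of the closure is `d + s` with `d ∈ L`, so `d ≥ δ` and `s` is one `δ` lower
  have key : ∀ n : ℕ, ((closure L : Set ℝ) ∩ Iic (n * δ)).Finite := by
    intro n
    induction n with
    | zero =>
      refine (finite_singleton 0).subset fun s ⟨hs, hs0⟩ => ?_
      simp only [mem_Iic, Nat.cast_zero, zero_mul] at hs0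
      exact le_antisymm hs0 (hnonneg s hs)
    | succ n ih =>
      refine ((finite_singleton 0).union ((hL ((n + 1) * δ)).add ih)).subset ?_
      rintro _ ⟨hs, hsC⟩
      induction hs using closure_induction_left with
      | zero => exact Or.inl rfl
      | add_left d hd s hs _ =>
        have := hδL d hd
        have := hnonneg s hs
        simp only [mem_Iic, Nat.cast_succ] at hsC
        exact Or.inr ⟨d, ⟨hd, by simp only [mem_Iic]; linarith⟩, s,
          ⟨hs, by simp only [mem_Iic]; linarith⟩, rfl⟩
  obtain ⟨n, hn⟩ := exists_nat_ge (C / δ)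
  exact (key n).subset fun s ⟨hs, hsC⟩ =>
    ⟨hs, (mem_Iic.1 hsC).trans ((div_le_iff₀ hδ).1 hn)⟩

section LevelPart

noncomputable def levelPart {G : Type*} (u : G → ℝ) (c : ℝ) (f : G → ℤ) : G → ℤ :=
  fun g => if u g = c then f g else 0

variable {G : Type*} {u : G → ℝ}

theorem levelPart_levelPart (c : ℝ) (f : G → ℤ) :
    levelPart u c (levelPart u c f) = levelPart u c f := by
  ext g
  simp only [levelPart]
  split_ifs <;> rfl

theorem levelPart_apply_ne_zero {c : ℝ} {f : G → ℤ} {g : G} (h : levelPart u c f g ≠ 0) :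
    u g = c ∧ f g ≠ 0 := by
  simp only [levelPart] at h
  split_ifs at h with hg
  · exact ⟨hg, h⟩
  · exact absurd rfl h

theorem sub_levelPart_apply_ne_zero {c : ℝ} {f : G → ℤ} {g : G}
    (h : (f - levelPart u c f) g ≠ 0) : u g ≠ c ∧ f g ≠ 0 := by
  simp only [Pi.sub_apply, levelPart] at h
  split_ifs at h with hg
  · exact absurd (sub_self _) h
  · exact ⟨hg, by simpa using h⟩

end LevelPart

section Novikov

variable {G : Type*} [Group G] {u : G → ℝ}

theorem NovCond.of_finite_support {f : G → ℤ} (hf : (support f).Finite) : NovCond u f :=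
  fun _ => hf.subset fun _ hg => hg.1

theorem NovCond.zero : NovCond u (0 : G → ℤ) :=
  of_finite_support (by simp)

theorem NovCond.mono {f g : G → ℤ} (hf : NovCond u f) (hgf : support g ⊆ support f) :
    NovCond u g :=
  fun C => (hf C).subset fun _ ⟨hk, hkC⟩ => ⟨hgf hk, hkC⟩

theorem NovCond.add {f g : G → ℤ} (hf : NovCond u f) (hg : NovCond u g) :
    NovCond u (f + g) :=
  fun C => ((hf C).union (hg C)).subset fun _ ⟨hk, hkC⟩ =>
    (support_add f g hk).imp (⟨·, hkC⟩) (⟨·, hkC⟩)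

theorem NovCond.sub {f g : G → ℤ} (hf : NovCond u f) (hg : NovCond u g) :
    NovCond u (f - g) :=
  fun C => ((hf C).union (hg C)).subset fun _ ⟨hk, hkC⟩ =>
    (support_sub f g hk).imp (⟨·, hkC⟩) (⟨·, hkC⟩)

theorem NovCond.finite_image_inter_Iic {f : G → ℤ} (hf : NovCond u f) (C : ℝ) :
    (u '' support f ∩ Iic C).Finite :=
  ((hf C).image u).subset fun _ ⟨⟨g, hg, hgu⟩, hC⟩ => ⟨g, ⟨hg, hgu ▸ hC⟩, hgu⟩

theorem NovCond.isLeast_minLevel {f : G → ℤ} (hf : NovCond u f) (h0 : f ≠ 0) :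
    IsLeast (u '' support f) (minLevel u f) := by
  obtain ⟨c, hc⟩ := support_nonempty_iff.2 h0
  obtain ⟨g₀, hg₀, hmin⟩ := exists_min_image _ u (hf (u c)) ⟨c, hc, le_rfl⟩
  have hleast : IsLeast (u '' support f) (u g₀) := by
    refine ⟨⟨g₀, hg₀.1, rfl⟩, ?_⟩
    rintro _ ⟨g, hg, rfl⟩
    rcases le_total (u g) (u c) with h | h
    · exact hmin g ⟨hg, h⟩
    · exact hg₀.2.trans h
  rwa [minLevel, hleast.csInf_eq]

theorem NovCond.minLevel_le {f : G → ℤ} (hf : NovCond u f) {g : G} (hg : f g ≠ 0) :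
    minLevel u f ≤ u g :=
  (hf.isLeast_minLevel fun h => hg (congrFun h g)).2 ⟨g, hg, rfl⟩

theorem NovCond.exists_eq_minLevel {f : G → ℤ} (hf : NovCond u f) (h0 : f ≠ 0) :
    ∃ g, f g ≠ 0 ∧ u g = minLevel u f :=
  (hf.isLeast_minLevel h0).1

theorem exists_of_conv_ne_zero {f g : G → ℤ} {k : G} (h : conv f g k ≠ 0) :
    ∃ a b, a * b = k ∧ f a ≠ 0 ∧ g b ≠ 0 := by
  by_contra! hfg
  refine h (finsum_eq_zero_of_forall_eq_zero fun p => ?_)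
  split_ifs with hp
  · by_cases ha : f p.1 = 0
    · simp [ha]
    · simp [hfg p.1 p.2 hp ha]
  · rfl

theorem conv_zero_left (g : G → ℤ) : conv 0 g = 0 := by
  ext k
  by_contra h
  obtain ⟨a, -, -, ha, -⟩ := exists_of_conv_ne_zero h
  exact ha rfl

theorem NovCond.conv (hu : ∀ a b : G, u (a * b) = u a + u b) {f g : G → ℤ}
    (hf : NovCond u f) (hg : NovCond u g) : NovCond u (conv f g) := by
  intro C
  refine (((hf (C - minLevel u g)).prod (hg (C - minLevel u f))).image
    fun p => p.1 * p.2).subset ?_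
  rintro k ⟨hk, hkC⟩
  obtain ⟨a, b, rfl, ha, hb⟩ := exists_of_conv_ne_zero hk
  have := hf.minLevel_le ha
  have := hg.minLevel_le hb
  rw [hu] at hkC
  exact ⟨(a, b), ⟨⟨ha, by linarith⟩, hb, by linarith⟩, rfl⟩

theorem NovCond.finite_support_convTerm (hu : ∀ a b : G, u (a * b) = u a + u b)
    {f g : G → ℤ} (hf : NovCond u f) (hg : NovCond u g) (k : G) :
    (support fun p : G × G => if p.1 * p.2 = k then f p.1 * g p.2 else 0).Finite := by
  refine ((hf (u k - minLevel u g)).image fun a => (a, a⁻¹ * k)).subset ?_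
  rintro ⟨a, b⟩ hp
  simp only [mem_support, ne_eq, ite_eq_right_iff, mul_eq_zero, not_forall, not_or] at hp
  obtain ⟨rfl, ha, hb⟩ := hp
  have := hg.minLevel_le hb
  refine ⟨a, ⟨ha, ?_⟩, by simp⟩
  rw [hu]
  linarith

theorem conv_add_left (hu : ∀ a b : G, u (a * b) = u a + u b) {f₁ f₂ g : G → ℤ}
    (hf₁ : NovCond u f₁) (hf₂ : NovCond u f₂) (hg : NovCond u g) :
    conv (f₁ + f₂) g = conv f₁ g + conv f₂ g := by
  ext k
  rw [Pi.add_apply, conv, conv, conv, ← finsum_add_distrib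
    (hf₁.finite_support_convTerm hu hg k) (hf₂.finite_support_convTerm hu hg k)]
  refine finsum_congr fun p => ?_
  split_ifs <;> simp [add_mul]

theorem conv_add_right (hu : ∀ a b : G, u (a * b) = u a + u b) {f g₁ g₂ : G → ℤ}
    (hf : NovCond u f) (hg₁ : NovCond u g₁) (hg₂ : NovCond u g₂) :
    conv f (g₁ + g₂) = conv f g₁ + conv f g₂ := by
  ext k
  rw [Pi.add_apply, conv, conv, conv, ← finsum_add_distrib
    (hf.finite_support_convTerm hu hg₁ k) (hf.finite_support_convTerm hu hg₂ k)]
  refine finsum_congr fun p => ?_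
  split_ifs <;> simp [mul_add]

theorem conv_apply_congr_left (hu : ∀ a b : G, u (a * b) = u a + u b) {f₁ f₂ x : G → ℤ}
    {c l : ℝ} (hx : ∀ t, x t ≠ 0 → l ≤ u t) (hf : ∀ g, u g < c → f₁ g = f₂ g) {k : G}
    (hk : u k < c + l) : conv f₁ x k = conv f₂ x k := by
  refine finsum_congr fun ⟨a, b⟩ => ?_
  split_ifs with hab
  · by_cases hb : x b = 0
    · simp [hb]
    have := hx b hb
    rw [← hab, hu] at hk
    rw [hf a (by linarith)]
  · rfl

theorem minPart_eq_levelPart (f : G → ℤ) : minPart u f = levelPart u (minLevel u f) f := rfl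

theorem conv_levelPart (hu : ∀ a b : G, u (a * b) = u a + u b) (c d : ℝ) (f g : G → ℤ) :
    conv (levelPart u c f) (levelPart u d g) = levelPart u (c + d) (conv f (levelPart u d g)) := by
  ext k
  rw [levelPart]
  split_ifs with hk
  · refine finsum_congr fun ⟨a, b⟩ => ?_
    by_cases hab : a * b = k
    · by_cases hb : u b = d
      · have ha : u a = c := by rw [← hab, hu] at hk; linarith
        simp [levelPart, hab, ha, hb]
      · simp [levelPart, hb]
    · simp [hab]
  · refine finsum_eq_zero_of_forall_eq_zero fun ⟨a, b⟩ => ?_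
    by_cases hab : a * b = k
    · by_cases ha : u a = c
      · by_cases hb : u b = d
        · exact absurd (by rw [← hab, hu, ha, hb]) hk
        · simp [levelPart, hb]
      · simp [levelPart, ha]
    · simp [hab]

def gapSet (u : G → ℝ) (x : G → ℤ) : Set ℝ :=
  (fun t => u t - minLevel u x) '' support x \ {0}

theorem gapSet_pos {x : G → ℤ} (hx : NovCond u x) : ∀ d ∈ gapSet u x, 0 < d := by
  rintro _ ⟨⟨t, ht, rfl⟩, hne⟩
  exact lt_of_le_of_ne (sub_nonneg.2 (hx.minLevel_le ht)) (Ne.symm hne)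

theorem gapSet_finite_inter_Iic {x : G → ℤ} (hx : NovCond u x) (C : ℝ) :
    (gapSet u x ∩ Iic C).Finite :=
  ((hx (C + minLevel u x)).image fun t => u t - minLevel u x).subset
    fun _ ⟨⟨⟨t, ht, htd⟩, _⟩, hC⟩ =>
      ⟨t, ⟨ht, by simp only [mem_Iic] at hC; linarith⟩, htd⟩

structure IsDivisionStep (u : G → ℝ) (x y a a' : G → ℤ) : Prop where
  novCond : NovCond u a'
  level_of_ne : ∀ g, a' g ≠ a g → u g + minLevel u x = minLevel u (y - conv a x)
  remainder_level : ∀ g, (y - conv a' x) g ≠ 0 →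
    ((y - conv a x) g ≠ 0 ∧ minLevel u (y - conv a x) < u g) ∨
      ∃ d ∈ gapSet u x, u g = minLevel u (y - conv a x) + d

theorem isDivisionStep_self {x y a : G → ℤ} (ha : NovCond u a) (hr : y - conv a x = 0) :
    IsDivisionStep u x y a a where
  novCond := ha
  level_of_ne _ h := absurd rfl h
  remainder_level g h := absurd (congrFun hr g) h

theorem isDivisionStep_add_levelPart (hu : ∀ a b : G, u (a * b) = u a + u b)
    {x y a β : G → ℤ} (hx : NovCond u x) (hy : NovCond u y) (ha : NovCond u a)
    (hβ : (support β).Finite) (hβr : minPart u (y - conv a x) = conv β (minPart u x)) :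
    IsDivisionStep u x y a
      (a + levelPart u (minLevel u (y - conv a x) - minLevel u x) β) := by
  set r := y - conv a x
  set m := minLevel u r
  set l := minLevel u x
  set β' := levelPart u (m - l) β
  have hr : NovCond u r := hy.sub (ha.conv hu hx)
  have hβ' : NovCond u β' := NovCond.of_finite_support <| hβ.subset fun g hg =>
    (levelPart_apply_ne_zero hg).2
  have hmx : NovCond u (minPart u x) := hx.mono fun g hg => (levelPart_apply_ne_zero hg).2
  have hmin : minPart u r = conv β' (minPart u x) := by
    rw [minPart_eq_levelPart x, conv_levelPart hu, sub_add_cancel, ← minPart_eq_levelPart, ← hβr,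
      minPart_eq_levelPart, levelPart_levelPart]
  have hsplit : conv β' x = minPart u r + conv β' (x - minPart u x) := by
    rw [hmin, ← conv_add_right hu hβ' hmx (hx.sub hmx), add_sub_cancel]
  have hrem : y - conv (a + β') x = (r - minPart u r) - conv β' (x - minPart u x) := by
    rw [conv_add_left hu ha hβ' hx, hsplit, sub_sub, sub_sub]
  refine ⟨ha.add hβ', fun g hg => ?_, fun g hg => ?_⟩
  · have := (levelPart_apply_ne_zero (by simpa using hg : β' g ≠ 0)).1
    linarith
  rw [hrem] at hg
  by_cases hrg : (r - minPart u r) g = 0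
  · obtain ⟨a', b, rfl, ha', hb⟩ := exists_of_conv_ne_zero (by simpa [hrg] using hg)
    obtain ⟨hbl, hxb⟩ := sub_levelPart_apply_ne_zero hb
    refine Or.inr ⟨u b - l, ⟨⟨b, hxb, rfl⟩, sub_ne_zero.2 hbl⟩, ?_⟩
    rw [hu, (levelPart_apply_ne_zero ha').1]
    ring
  · obtain ⟨hgm, hrg⟩ := sub_levelPart_apply_ne_zero hrg
    exact Or.inl ⟨hrg, lt_of_le_of_ne (hr.minLevel_le hrg) (Ne.symm hgm)⟩

theorem exists_novCond_eq_of_stabilizes {a : ℕ → G → ℤ} {c : ℕ → ℝ} (hc : Monotone c)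
    (hc_unbdd : ∀ C, ∃ n, C < c n) (ha : ∀ n, NovCond u (a n))
    (hstep : ∀ n g, a (n + 1) g ≠ a n g → c n ≤ u g) :
    ∃ α, NovCond u α ∧ ∀ n g, u g < c n → α g = a n g := by
  have hstable : ∀ n g, u g < c n → ∀ k, n ≤ k → a k g = a n g := by
    intro n g hg k hk
    induction k, hk using Nat.le_induction with
    | base => rfl
    | succ k hnk ih =>
      by_contra h
      exact (hstep k g (ih ▸ h)).not_gt (hg.trans_le (hc hnk))
  choose N hN using fun g => hc_unbdd (u g)
  have hα : ∀ n g, u g < c n → a (N g) g = a n g := fun n g hg => by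
    rw [← hstable (N g) g (hN g) _ (le_max_left _ n), hstable n g hg _ (le_max_right _ _)]
  refine ⟨fun g => a (N g) g, fun C => ?_, hα⟩
  obtain ⟨n, hn⟩ := hc_unbdd C
  exact (ha n C).subset fun g ⟨hg, hgC⟩ => ⟨hα n g (hgC.trans_lt hn) ▸ hg, hgC⟩

theorem exists_conv_eq_of_remainder_levels_unbounded (hu : ∀ a b : G, u (a * b) = u a + u b)
    {x y : G → ℤ} (hx : NovCond u x) {a : ℕ → G → ℤ} {m : ℕ → ℝ} (hm : Monotone m)
    (hm_unbdd : ∀ C, ∃ n, C < m n) (ha : ∀ n, NovCond u (a n))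
    (hstep : ∀ n g, a (n + 1) g ≠ a n g → m n ≤ u g + minLevel u x)
    (hrem : ∀ n k, (y - conv (a n) x) k ≠ 0 → m n ≤ u k) :
    ∃ α, NovCond u α ∧ conv α x = y := by
  obtain ⟨α, hα, hαa⟩ := exists_novCond_eq_of_stabilizes (c := fun n => m n - minLevel u x)
    (fun _ _ h => sub_le_sub_right (hm h) _)
    (fun C => (hm_unbdd (C + minLevel u x)).imp fun _ h => by linarith) ha
    (fun n g h => by linarith [hstep n g h])
  refine ⟨α, hα, funext fun k => ?_⟩
  obtain ⟨n, hn⟩ := hm_unbdd (u k)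
  have hk : (y - conv (a n) x) k = 0 := by
    by_contra h
    linarith [hrem n k h]
  rw [conv_apply_congr_left hu (fun t => hx.minLevel_le) (hαa n) (by linarith : u k < _ + _)]
  exact (sub_eq_zero.1 hk).symm

theorem novCond_of_division_seq {x y : G → ℤ} {a : ℕ → G → ℤ} (h0 : a 0 = 0)
    (hstep : ∀ n, IsDivisionStep u x y (a n) (a (n + 1))) (n : ℕ) : NovCond u (a n) := by
  cases n with
  | zero => exact h0 ▸ NovCond.zero
  | succ n => exact (hstep n).novCond

theorem strictMono_minLevel_of_division_seq (hu : ∀ a b : G, u (a * b) = u a + u b)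
    {x y : G → ℤ} (hx : NovCond u x) (hy : NovCond u y) {a : ℕ → G → ℤ} (h0 : a 0 = 0)
    (hstep : ∀ n, IsDivisionStep u x y (a n) (a (n + 1)))
    (hr : ∀ n, y - conv (a n) x ≠ 0) : StrictMono fun n => minLevel u (y - conv (a n) x) := by
  refine strictMono_nat_of_lt_succ fun n => ?_
  have hnov := hy.sub ((novCond_of_division_seq h0 hstep (n + 1)).conv hu hx)
  obtain ⟨g, hg, hgm⟩ := hnov.exists_eq_minLevel (hr (n + 1))
  rw [← hgm]
  rcases (hstep n).remainder_level g hg with ⟨-, h⟩ | ⟨d, hd, h⟩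
  · exact h
  · linarith [gapSet_pos hx d hd]

theorem level_mem_of_division_seq (hu : ∀ a b : G, u (a * b) = u a + u b)
    {x y : G → ℤ} (hx : NovCond u x) (hy : NovCond u y) {a : ℕ → G → ℤ} (h0 : a 0 = 0)
    (hstep : ∀ n, IsDivisionStep u x y (a n) (a (n + 1)))
    (hr : ∀ n, y - conv (a n) x ≠ 0) (n : ℕ) {g : G} (hg : (y - conv (a n) x) g ≠ 0) :
    u g ∈ u '' support y + (AddSubmonoid.closure (gapSet u x) : Set ℝ) := by
  induction n generalizing g with
  | zero =>
    rw [h0, conv_zero_left, sub_zero] at hg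
    exact ⟨u g, ⟨g, hg, rfl⟩, 0, zero_mem _, add_zero _⟩
  | succ n ih =>
    rcases (hstep n).remainder_level g hg with ⟨hg', -⟩ | ⟨d, hd, hgd⟩
    · exact ih hg'
    have hnov := hy.sub ((novCond_of_division_seq h0 hstep n).conv hu hx)
    obtain ⟨g₀, hg₀, hg₀m⟩ := hnov.exists_eq_minLevel (hr n)
    obtain ⟨b, hb, s, hs, hbs⟩ := ih hg₀
    refine ⟨b, hb, s + d, add_mem hs (AddSubmonoid.subset_closure hd), ?_⟩
    rw [hgd, ← hg₀m, ← hbs, add_assoc]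

theorem exists_conv_eq_of_division_seq (hu : ∀ a b : G, u (a * b) = u a + u b)
    {x y : G → ℤ} (hx : NovCond u x) (hy : NovCond u y) {a : ℕ → G → ℤ} (h0 : a 0 = 0)
    (hstep : ∀ n, IsDivisionStep u x y (a n) (a (n + 1)))
    (hr : ∀ n, y - conv (a n) x ≠ 0) : ∃ α, NovCond u α ∧ conv α x = y := by
  have hnov n : NovCond u (y - conv (a n) x) :=
    hy.sub ((novCond_of_division_seq h0 hstep n).conv hu hx)
  have hm := strictMono_minLevel_of_division_seq hu hx hy h0 hstep hr
  have hM : ∀ C,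
      ((u '' support y + (AddSubmonoid.closure (gapSet u x) : Set ℝ)) ∩ Iic C).Finite :=
    finite_add_inter_Iic (by rintro _ ⟨g, hg, rfl⟩; exact hy.minLevel_le hg)
      (fun _ => AddSubmonoid.nonneg_of_mem_closure fun d hd => (gapSet_pos hx d hd).le)
      hy.finite_image_inter_Iic
      (AddSubmonoid.finite_closure_inter_Iic (gapSet_pos hx) (gapSet_finite_inter_Iic hx))
  have hm_unbdd := hm.exists_lt_of_mem_of_finite_inter_Iic (fun n => by
    obtain ⟨g, hg, hgm⟩ := (hnov n).exists_eq_minLevel (hr n)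
    exact hgm ▸ level_mem_of_division_seq hu hx hy h0 hstep hr n hg) hM
  exact exists_conv_eq_of_remainder_levels_unbounded hu hx hm.monotone hm_unbdd
    (novCond_of_division_seq h0 hstep) (fun n g h => ((hstep n).level_of_ne g h).ge)
    (fun n _ h => (hnov n).minLevel_le h)

end Novikov

theorem stmt19_general (G : Type*) [Group G]
    (u : G → ℝ) (hu : ∀ a b : G, u (a * b) = u a + u b)
    (x y : G → ℤ) (hx : NovCond u x) (hy : NovCond u y)
    (hdiv : ∀ α : G → ℤ, NovCond u α → (fun g => y g - conv α x g) ≠ 0 →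
      ∃ β : G → ℤ, (Function.support β).Finite ∧
        minPart u (fun g => y g - conv α x g) = conv β (minPart u x)) :
    ∃ α : G → ℤ, NovCond u α ∧ conv α x = y := by
  have hstep : ∀ a, NovCond u a → ∃ a', IsDivisionStep u x y a a' := by
    intro a ha
    by_cases hr : y - conv a x = 0
    · exact ⟨a, isDivisionStep_self ha hr⟩
    obtain ⟨β, hβ, hβr⟩ := hdiv a ha hr
    exact ⟨_, isDivisionStep_add_levelPart hu hx hy ha hβ hβr⟩
  choose! next hnext using hstep
  have hnov : ∀ n, NovCond u (next^[n] 0) := by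
    intro n
    induction n with
    | zero => exact NovCond.zero
    | succ n ih => rw [iterate_succ_apply']; exact (hnext _ ih).novCond
  have hseq : ∀ n, IsDivisionStep u x y (next^[n] 0) (next^[n + 1] 0) := fun n => by
    rw [iterate_succ_apply']
    exact hnext _ (hnov n)
  by_cases hr : ∀ n, y - conv (next^[n] 0) x ≠ 0
  · exact exists_conv_eq_of_division_seq hu hx hy rfl hseq hr
  obtain ⟨n, hn⟩ := not_forall_not.1 hr
  exact ⟨_, hnov n, (sub_eq_zero.1 hn).symm⟩

/-- Division algorithm by increasing value of `u` in the Novikov ring: if the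
`u`-minimal part of `x` divides (up to translation by elements of `G`, i.e. by a
finitely supported multiplier) the `u`-minimal part of every nonzero remainder
`y − αx`, then `x` divides `y` in `ℤ[G]_u`. -/
theorem stmt19 (G : Type*) [Group G]
    (u : G → ℝ) (hu : ∀ a b : G, u (a * b) = u a + u b)
    (x y : G → ℤ) (hx : NovCond u x) (hy : NovCond u y) (hx0 : x ≠ 0)
    (hdiv : ∀ α : G → ℤ, NovCond u α → (fun g => y g - conv α x g) ≠ 0 →
      ∃ β : G → ℤ, (Function.support β).Finite ∧
        minPart u (fun g => y g - conv α x g) = conv β (minPart u x)) :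
    ∃ α : G → ℤ, NovCond u α ∧ conv α x = y :=
  stmt19_general G u hu x y hx hy hdiv
end
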